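/- arXiv:1507.03535 — 3 statements merged into one kernel-verified Lean document; each statement's English description precedes it below -/
import Mathlib

section
/- Let K be a field equipped with a nonarchimedean absolute value |·|, and let λ₁, λ₂, λ₃ ∈ K, each different from 1, satisfy the fixed-point residue formula. If |λ₁| > 1 and |λ₂| = 1, then |λ₃| = 1 and |λ₂λ₃ − 1| = |λ₂ − 1|²/|λ₁| < 1. (In particular, the reduction of λ₃ modulo the maximal ideal is the inverse of the reduction of λ₂.) -/
/-! Clearing denominators, the residue formula says `λ₁λ₂λ₃ = λ₁ + λ₂ + λ₃ - 2`, which gives the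
two factorizations `λ₃ (λ₁λ₂ - 1) = (λ₁ - 1) + (λ₂ - 1)` and
`(λ₂λ₃ - 1)(λ₁λ₂ - 1) = (λ₂ - 1)²`. Since `|λ₁| > 1 ≥ |λ₂ - 1|`, the ultrametric inequality makes
`|λ₁λ₂ - 1|`, `|λ₁ - 1|` and `|(λ₁ - 1) + (λ₂ - 1)|` all equal to `|λ₁|`; taking absolute values in
the two factorizations gives the result. -/

namespace IsNonarchimedean

variable {F α : Type*} [FunLike F α ℝ] {f : F}

lemma sub_eq_left_of_lt [AddGroup α] [AddGroupSeminormClass F α ℝ] (hna : IsNonarchimedean f)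
    {x y : α} (h : f y < f x) : f (x - y) = f x := by
  rw [sub_eq_add_neg]
  exact hna.add_eq_left_of_lt (by rwa [map_neg_eq_map])

lemma apply_sub_one_le_one [AddGroupWithOne α] [AddGroupSeminormClass F α ℝ] [OneHomClass F α ℝ]
    (hna : IsNonarchimedean f) {x : α} (hx : f x ≤ 1) : f (x - 1) ≤ 1 := by
  rw [sub_eq_add_neg]
  exact (hna x (-1)).trans (max_le hx (by rw [map_neg_eq_map, map_one]))

end IsNonarchimedean

theorem residue_formula_iff {K : Type*} [Field K] {a b c : K} (ha : a ≠ 1) (hb : b ≠ 1)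
    (hc : c ≠ 1) : 1 / (1 - a) + 1 / (1 - b) + 1 / (1 - c) = 1 ↔ a * b * c = a + b + c - 2 := by
  have ha' : 1 - a ≠ 0 := sub_ne_zero.mpr ha.symm
  have hb' : 1 - b ≠ 0 := sub_ne_zero.mpr hb.symm
  have hc' : 1 - c ≠ 0 := sub_ne_zero.mpr hc.symm
  rw [div_add_div _ _ ha' hb', div_add_div _ _ (mul_ne_zero ha' hb') hc',
    div_eq_one_iff_eq (mul_ne_zero (mul_ne_zero ha' hb') hc')]
  constructor <;> intro h <;> linear_combination h

/-- If `λ₁, λ₂, λ₃` in a nonarchimedean valued field `K`, each different from `1`,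
satisfy the fixed-point residue formula, and `|λ₁| > 1`, `|λ₂| = 1`, then `|λ₃| = 1` and
`|λ₂λ₃ − 1| = |λ₂ − 1|²/|λ₁| < 1`. -/
theorem stmt_12 {K : Type*} [Field K] (v : AbsoluteValue K ℝ) (hna : IsNonarchimedean v)
    (l1 l2 l3 : K) (h1 : l1 ≠ 1) (h2 : l2 ≠ 1) (h3 : l3 ≠ 1)
    (hres : 1 / (1 - l1) + 1 / (1 - l2) + 1 / (1 - l3) = 1)
    (hr1 : 1 < v l1) (hr2 : v l2 = 1) :
    v l3 = 1 ∧ v (l2 * l3 - 1) = v (l2 - 1) ^ 2 / v l1 ∧ v (l2 * l3 - 1) < 1 := by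
  have hrel := (residue_formula_iff h1 h2 h3).1 hres
  have hv1 : 0 < v l1 := one_pos.trans hr1
  have hsub2 : v (l2 - 1) ≤ 1 := hna.apply_sub_one_le_one hr2.le
  have hden : v (l1 * l2 - 1) = v l1 := by
    rw [hna.sub_eq_left_of_lt (by rwa [map_mul, hr2, mul_one, map_one]), map_mul, hr2, mul_one]
  have hsub1 : v (l1 - 1) = v l1 := hna.sub_eq_left_of_lt (by rwa [map_one])
  have hnum : v ((l1 - 1) + (l2 - 1)) = v l1 := by
    rw [hna.add_eq_left_of_lt (hsub1 ▸ hsub2.trans_lt hr1), hsub1]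
  have hv3 : v l3 = 1 := by
    refine mul_right_cancel₀ hv1.ne' ?_
    calc v l3 * v l1 = v (l3 * (l1 * l2 - 1)) := by rw [map_mul, hden]
      _ = v ((l1 - 1) + (l2 - 1)) := by congr 1; linear_combination hrel
      _ = 1 * v l1 := by rw [hnum, one_mul]
  have hmain : v (l2 * l3 - 1) = v (l2 - 1) ^ 2 / v l1 := by
    refine eq_div_of_mul_eq hv1.ne' ?_
    rw [← hden, ← map_mul, ← map_pow]
    congr 1
    linear_combination l2 * hrel
  refine ⟨hv3, hmain, ?_⟩
  rw [hmain, div_lt_one hv1]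
  calc v (l2 - 1) ^ 2 ≤ 1 := pow_le_one₀ (v.nonneg _) hsub2
    _ < v l1 := hr1
end

section
/- Let K be a field equipped with a nonarchimedean absolute value |·|, and let λ₁, λ₂, λ₃ ∈ K, each different from 1, satisfy the fixed-point residue formula. Suppose |λ₁| > 1 and |λ₂ − 1| < 1. Set σ₁ = λ₁ + λ₂ + λ₃ and σ₂ = λ₁λ₂ + λ₁λ₃ + λ₂λ₃. Then |λ₃ − 1| < 1, |σ₁ − λ₁| < |λ₁|, and |σ₂ − 2λ₁| < |λ₁|. (Hence [σ₁ : σ₂ : 1] specializes to the boundary point [1 : 2 : 0] of the compactified moduli space; this is the potential additive reduction stratum (W3).) -/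
/-!
Put `a = 1/(1-λ₁)`, `b = 1/(1-λ₂)`, `c = 1/(1-λ₃)`, so that `a + b + c = 1`. Since `|λ₁| > 1` we
have `|a| < 1`, and `|λ₂ - 1| < 1` gives `|b| > 1`; in `c = 1 - a - b` the term `b` then dominates,
so `|c| = |b|`, i.e. `|λ₃ - 1| = |λ₂ - 1| < 1`. Now `λ₂, λ₃` lie in the closed unit disc, so
`σ₁ - λ₁ = λ₂ + λ₃` and `σ₂ - 2λ₁ = λ₁((λ₂ - 1) + (λ₃ - 1)) + λ₂λ₃` are both smaller than `|λ₁|`.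
-/

namespace IsNonarchimedean

section Ring

variable {R : Type*} [Ring R] [IsDomain R] {v : AbsoluteValue R ℝ}

lemma apply_le_one_of_apply_sub_one_lt (hna : IsNonarchimedean v) {x : R} (hx : v (x - 1) < 1) :
    v x ≤ 1 :=
  calc v x = v ((x - 1) + 1) := by rw [sub_add_cancel]
    _ ≤ max (v (x - 1)) (v 1) := hna _ _
    _ ≤ 1 := by rw [map_one]; exact max_le hx.le le_rfl

lemma apply_one_sub_eq_of_one_lt (hna : IsNonarchimedean v) {x : R} (hx : 1 < v x) :
    v (1 - x) = v x := by
  rw [← v.map_neg x, sub_eq_neg_add]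
  exact hna.add_eq_left_of_lt (by rwa [map_one, v.map_neg])

lemma apply_eq_of_add_add_eq_one (hna : IsNonarchimedean v) {a b c : R} (habc : a + b + c = 1)
    (ha : v a ≤ 1) (hb : 1 < v b) : v c = v b := by
  have hsmall : v (1 - a) < v (-b) :=
    calc v (1 - a) = v (1 + -a) := by rw [sub_eq_add_neg]
      _ ≤ max (v 1) (v (-a)) := hna _ _
      _ ≤ 1 := by rw [map_one, v.map_neg]; exact max_le le_rfl ha
      _ < v (-b) := by rwa [v.map_neg]
  rw [show c = -b + (1 - a) by rw [← habc]; abel, hna.add_eq_left_of_lt hsmall, v.map_neg]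

end Ring

lemma apply_one_sub_eq_of_residue_formula {K : Type*} [Field K] {v : AbsoluteValue K ℝ}
    (hna : IsNonarchimedean v) {l1 l2 l3 : K}
    (hres : 1 / (1 - l1) + 1 / (1 - l2) + 1 / (1 - l3) = 1) (hr1 : 1 < v l1) (h2 : l2 ≠ 1)
    (hr2 : v (l2 - 1) < 1) : v (1 - l3) = v (1 - l2) := by
  have ha : v (1 / (1 - l1)) ≤ 1 := by
    rw [map_div₀, map_one, hna.apply_one_sub_eq_of_one_lt hr1]
    exact div_le_one_of_le₀ hr1.le (by positivity)
  have hb : 1 < v (1 / (1 - l2)) := by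
    rw [map_div₀, map_one, v.map_sub]
    exact one_lt_one_div (v.pos (sub_ne_zero.mpr h2)) hr2
  have hc := hna.apply_eq_of_add_add_eq_one hres ha hb
  rwa [map_div₀, map_div₀, map_one, one_div, one_div, inv_inj] at hc

end IsNonarchimedean

theorem stmt_14_general {K : Type*} [Field K] (v : AbsoluteValue K ℝ) (hna : IsNonarchimedean v)
    (l1 l2 l3 : K) (h2 : l2 ≠ 1)
    (hres : 1 / (1 - l1) + 1 / (1 - l2) + 1 / (1 - l3) = 1)
    (hr1 : 1 < v l1) (hr2 : v (l2 - 1) < 1)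
    (σ₁ σ₂ : K) (hσ₁ : σ₁ = l1 + l2 + l3) (hσ₂ : σ₂ = l1 * l2 + l1 * l3 + l2 * l3) :
    v (l3 - 1) < 1 ∧ v (σ₁ - l1) < v l1 ∧ v (σ₂ - 2 * l1) < v l1 := by
  have hr3 : v (l3 - 1) < 1 := by
    rwa [v.map_sub, hna.apply_one_sub_eq_of_residue_formula hres hr1 h2 hr2, v.map_sub]
  have hl2 := hna.apply_le_one_of_apply_sub_one_lt hr2
  have hl3 := hna.apply_le_one_of_apply_sub_one_lt hr3
  have hl23 : v (l2 * l3) < v l1 := by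
    rw [map_mul]; exact (mul_le_one₀ hl2 (v.nonneg _) hl3).trans_lt hr1
  have hl1_mul : v (l1 * ((l2 - 1) + (l3 - 1))) < v l1 := by
    rw [map_mul]
    exact mul_lt_of_lt_one_right (one_pos.trans hr1) ((hna _ _).trans_lt (max_lt hr2 hr3))
  refine ⟨hr3, ?_, ?_⟩
  · rw [show σ₁ - l1 = l2 + l3 by rw [hσ₁]; ring]
    exact (hna _ _).trans_lt ((max_le hl2 hl3).trans_lt hr1)
  · rw [show σ₂ - 2 * l1 = l1 * ((l2 - 1) + (l3 - 1)) + l2 * l3 by rw [hσ₂]; ring]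
    exact (hna _ _).trans_lt (max_lt hl1_mul hl23)

/-- potential additive reduction stratum (W3): If `λ₁, λ₂, λ₃`, each different
from `1`, satisfy the fixed-point residue formula, with `|λ₁| > 1` and `|λ₂ − 1| < 1`, then for
`σ₁ = λ₁+λ₂+λ₃` and `σ₂ = λ₁λ₂+λ₁λ₃+λ₂λ₃` one has `|λ₃ − 1| < 1`, `|σ₁ − λ₁| < |λ₁|`, and
`|σ₂ − 2λ₁| < |λ₁|`. -/
theorem stmt_14 {K : Type*} [Field K] (v : AbsoluteValue K ℝ) (hna : IsNonarchimedean v)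
    (l1 l2 l3 : K) (h1 : l1 ≠ 1) (h2 : l2 ≠ 1) (h3 : l3 ≠ 1)
    (hres : 1 / (1 - l1) + 1 / (1 - l2) + 1 / (1 - l3) = 1)
    (hr1 : 1 < v l1) (hr2 : v (l2 - 1) < 1)
    (σ₁ σ₂ : K) (hσ₁ : σ₁ = l1 + l2 + l3) (hσ₂ : σ₂ = l1 * l2 + l1 * l3 + l2 * l3) :
    v (l3 - 1) < 1 ∧ v (σ₁ - l1) < v l1 ∧ v (σ₂ - 2 * l1) < v l1 :=
  stmt_14_general v hna l1 l2 l3 h2 hres hr1 hr2 σ₁ σ₂ hσ₁ hσ₂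
end

section
/- Let K be a field equipped with a nonarchimedean absolute value |·|, and let λ₁, λ₂, λ₃ ∈ K, each different from 1, satisfy the fixed-point residue formula. Suppose |λ₁| > 1 and |λ₂| < 1. Set σ₁ = λ₁ + λ₂ + λ₃ and σ₂ = λ₁λ₂ + λ₁λ₃ + λ₂λ₃. Then |λ₃| > 1, |σ₁| < |λ₁| · |λ₃|, and |σ₂ − λ₁λ₃| < |λ₁| · |λ₃|. (Hence [σ₁ : σ₂ : 1] specializes to the boundary point [0 : 1 : 0] of the compactified moduli space; this is the potential constant reduction stratum (W4).) -/
/-!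
Clearing denominators, the residue formula says `λ₁λ₂λ₃ = σ₁ - 2`, equivalently
`λ₁(λ₂λ₃ - 1) = (λ₂ - 1) + (λ₃ - 1)`. If `|λ₃| ≤ 1`, then `|λ₂λ₃| < 1` forces `|λ₂λ₃ - 1| = 1`,
so the left side has absolute value `|λ₁| > 1` while the right side has absolute value at most `1`.
Hence `|λ₃| > 1`. Then `σ₁ = λ₁λ₂λ₃ + 2` and `σ₂ - λ₁λ₃ = λ₂λ₁ + λ₂λ₃` are sums of terms each
smaller than `|λ₁||λ₃|`, because `|λ₂| < 1` and `|2| ≤ 1`.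
-/

theorem mul_mul_eq_add_add_sub_two_of_residue {K : Type*} [Field K] {a b c : K}
    (ha : a ≠ 1) (hb : b ≠ 1) (hc : c ≠ 1)
    (h : 1 / (1 - a) + 1 / (1 - b) + 1 / (1 - c) = 1) :
    a * b * c = a + b + c - 2 := by
  have ha' : 1 - a ≠ 0 := sub_ne_zero.mpr ha.symm
  have hb' : 1 - b ≠ 0 := sub_ne_zero.mpr hb.symm
  have hc' : 1 - c ≠ 0 := sub_ne_zero.mpr hc.symm
  field_simp at h
  linear_combination h

namespace IsNonarchimedean

variable {R : Type*} [CommRing R] [Nontrivial R] {v : AbsoluteValue R ℝ}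

theorem apply_sub_one_le_one_s15 (hna : IsNonarchimedean v) {x : R} (hx : v x ≤ 1) :
    v (x - 1) ≤ 1 := by
  rw [sub_eq_add_neg]
  exact (hna x (-1)).trans (max_le hx (by simp))

theorem apply_sub_one_eq_one (hna : IsNonarchimedean v) {x : R} (hx : v x < 1) :
    v (x - 1) = 1 := by
  rw [sub_eq_add_neg, add_eq_right_of_lt hna (by simpa using hx)]
  simp

theorem one_lt_apply_of_mul_mul_eq (hna : IsNonarchimedean v) {a b c : R}
    (h : a * b * c = a + b + c - 2) (ha : 1 < v a) (hb : v b < 1) : 1 < v c := by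
  by_contra! hc
  have hbc : v (b * c) < 1 := by
    rw [map_mul]
    exact mul_lt_one_of_nonneg_of_lt_one_left (v.nonneg b) hb hc
  have hsplit : a * (b * c - 1) = (b - 1) + (c - 1) := by linear_combination h
  have hlhs : v (a * (b * c - 1)) = v a := by
    rw [map_mul, apply_sub_one_eq_one hna hbc, mul_one]
  have hrhs : v ((b - 1) + (c - 1)) ≤ 1 :=
    (hna _ _).trans (max_le (apply_sub_one_le_one_s15 hna hb.le) (apply_sub_one_le_one_s15 hna hc))
  rw [hsplit] at hlhs
  linarith

end IsNonarchimedean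

/-- potential constant reduction stratum (W4): If `λ₁, λ₂, λ₃`, each different
from `1`, satisfy the fixed-point residue formula, with `|λ₁| > 1` and `|λ₂| < 1`, then for
`σ₁ = λ₁+λ₂+λ₃` and `σ₂ = λ₁λ₂+λ₁λ₃+λ₂λ₃` one has `|λ₃| > 1`, `|σ₁| < |λ₁|⬝|λ₃|`, and
`|σ₂ − λ₁λ₃| < |λ₁|⬝|λ₃|`. -/
theorem stmt_15 {K : Type*} [Field K] (v : AbsoluteValue K ℝ) (hna : IsNonarchimedean v)
    (l1 l2 l3 : K) (h1 : l1 ≠ 1) (h2 : l2 ≠ 1) (h3 : l3 ≠ 1)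
    (hres : 1 / (1 - l1) + 1 / (1 - l2) + 1 / (1 - l3) = 1)
    (hr1 : 1 < v l1) (hr2 : v l2 < 1)
    (σ₁ σ₂ : K) (hσ₁ : σ₁ = l1 + l2 + l3) (hσ₂ : σ₂ = l1 * l2 + l1 * l3 + l2 * l3) :
    1 < v l3 ∧ v σ₁ < v l1 * v l3 ∧ v (σ₂ - l1 * l3) < v l1 * v l3 := by
  have hkey := mul_mul_eq_add_add_sub_two_of_residue h1 h2 h3 hres
  have hr3 := hna.one_lt_apply_of_mul_mul_eq hkey hr1 hr2
  have hshrink : ∀ x, 0 < v x → v (l2 * x) < v x := fun x hx => by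
    rw [map_mul]
    exact mul_lt_of_lt_one_left hx hr2
  have hv1 : 0 < v l1 := zero_lt_one.trans hr1
  have hv3 : 0 < v l3 := zero_lt_one.trans hr3
  refine ⟨hr3, ?_, ?_⟩
  · have hσ₁' : σ₁ = l2 * (l1 * l3) + 2 := by rw [hσ₁]; linear_combination -hkey
    have htwo : v 2 < v l1 * v l3 := by
      calc v 2 = v (2 : ℕ) := by norm_num
        _ ≤ 1 := hna.apply_natCast_le_one
        _ < v l1 * v l3 := one_lt_mul hr1.le hr3
    rw [hσ₁']
    refine (hna _ _).trans_lt (max_lt ?_ htwo)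
    simpa only [map_mul] using hshrink (l1 * l3) (by rw [map_mul]; exact mul_pos hv1 hv3)
  · have hσ₂' : σ₂ - l1 * l3 = l2 * l1 + l2 * l3 := by rw [hσ₂]; ring
    rw [hσ₂']
    refine (hna _ _).trans_lt (max_lt ?_ ?_)
    · exact (hshrink l1 hv1).trans_le (le_mul_of_one_le_right hv1.le hr3.le)
    · exact (hshrink l3 hv3).trans_le (le_mul_of_one_le_left hv3.le hr1.le)
end
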